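/- arXiv:1002.4920 — 2 statements merged into one kernel-verified Lean document; each statement's English description precedes it below -/
import Mathlib

section
/- Fix d ≥ 1 and an infinite-dimensional separable complex Hilbert space H. For a tuple T = (T₁,…,T_d) of bounded operators on H and p ∈ ℂ⟨x₁,…,x_d⟩, let p(T) denote the image of p under the unique unital algebra homomorphism ℂ⟨x₁,…,x_d⟩ → B(H) sending x_i to T_i. For a two-sided ideal J of ℂ⟨x₁,…,x_d⟩ set Z(J) := {T ∈ B(H)^d : p(T) = 0 for all p ∈ J}. If J is homogeneous, then {p ∈ ℂ⟨x₁,…,x_d⟩ : p(T) = 0 for every T ∈ Z(J)} = J. In particular, Z(J) = {(0,…,0)} if and only if J is the two-sided ideal generated by x₁,…,x_d. -/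
noncomputable section

/-- The free (noncommutative polynomial) algebra `ℂ⟨x₁,…,x_d⟩`. -/
abbrev FreeAlg (d : ℕ) : Type := MonoidAlgebra ℂ (FreeMonoid (Fin d))

/-- `p` is homogeneous of degree `n`. -/
def IsHomog {d : ℕ} (n : ℕ) (p : FreeAlg d) : Prop :=
  ∀ w ∈ p.coeff.support, FreeMonoid.length w = n

/-- The homogeneous component of degree `n`. -/
def homogComp {d : ℕ} (n : ℕ) (p : FreeAlg d) : FreeAlg d :=
  MonoidAlgebra.ofCoeff (Finsupp.filter (fun w : FreeMonoid (Fin d) => FreeMonoid.length w = n) p.coeff)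

/-- A two-sided ideal is homogeneous if it contains every homogeneous component of each of
its elements. -/
def IsHomogIdeal {d : ℕ} (I : TwoSidedIdeal (FreeAlg d)) : Prop :=
  ∀ p ∈ I, ∀ n : ℕ, homogComp n p ∈ I

/-- Evaluation `p ↦ p(T)`: the unique unital algebra homomorphism `ℂ⟨x₁,…,x_d⟩ → A`
sending `x_i` to `T_i`. -/
def evalTuple {d : ℕ} {A : Type*} [Semiring A] [Algebra ℂ A] (T : Fin d → A) :
    FreeAlg d →ₐ[ℂ] A :=
  MonoidAlgebra.lift ℂ A (FreeMonoid (Fin d)) (FreeMonoid.lift T)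

/-!
Let `p ∉ J` have degree at most `N`. The quotient `V` of `ℂ⟨x₁,…,x_d⟩` by the left ideal
`J + (monomials of degree > N)` is finite-dimensional, and `p` does not vanish in it: since `J` is
homogeneous, the part of degree `≤ N` of an element of `J` is again in `J`. Left multiplication on
`V` is thus a finite-dimensional representation that kills `J` but not `p`. Transport it to a
finite-dimensional subspace `K` of `H` and let every `x_i` act by `0` on a closed complement of
`K`; this is still a representation of `ℂ⟨x₁,…,x_d⟩` (the constant term is a character), it
kills `J` because a proper homogeneous ideal contains no nonzero constant term, and it does not
kill `p`. The second statement follows because the ideal generated by `x₁,…,x_d` is homogeneous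
with zero set `{0}`.
-/

section Character

variable {R A B : Type*} [CommRing R] [Ring A] [Algebra R A] [Ring B] [Algebra R B]

def NonUnitalAlgHom.extendByCharacter (ψ : A →ₙₐ[R] B) (ε : A →ₐ[R] R) : A →ₐ[R] B where
  toFun a := ε a • (1 - ψ 1) + ψ a
  map_one' := by simp
  map_mul' a b := by
    have hl : ∀ x, (1 - ψ 1) * ψ x = 0 := fun x => by
      rw [sub_mul, one_mul, ← map_mul, one_mul, sub_self]
    have hr : ∀ x, ψ x * (1 - ψ 1) = 0 := fun x => by
      rw [mul_sub, mul_one, ← map_mul, mul_one, sub_self]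
    have hQ : (1 - ψ 1) * (1 - ψ 1) = 1 - ψ 1 := by rw [mul_sub, mul_one, hl, sub_zero]
    simp only [map_mul, add_mul, mul_add, hQ, smul_mul_assoc, mul_smul_comm, hl, hr, smul_zero,
      add_zero, zero_add, mul_smul, smul_comm (ε a)]
  map_zero' := by simp
  map_add' a b := by simp only [map_add, add_smul]; abel
  commutes' r := by
    rw [AlgHom.commutes, Algebra.algebraMap_self_apply, Algebra.algebraMap_eq_smul_one, map_smul,
      ← smul_add, sub_add_cancel, Algebra.algebraMap_eq_smul_one]

lemma NonUnitalAlgHom.extendByCharacter_apply (ψ : A →ₙₐ[R] B) (ε : A →ₐ[R] R) (a : A) :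
    ψ.extendByCharacter ε a = ε a • (1 - ψ 1) + ψ a := rfl

lemma NonUnitalAlgHom.extendByCharacter_mul_map_one (ψ : A →ₙₐ[R] B) (ε : A →ₐ[R] R) (a : A) :
    ψ.extendByCharacter ε a * ψ 1 = ψ a := by
  rw [extendByCharacter_apply, add_mul, smul_mul_assoc, sub_mul, one_mul, ← map_mul, mul_one,
    sub_self, smul_zero, zero_add, ← map_mul, mul_one]

end Character

section Corner

variable {𝕜 K H : Type*} [NormedField 𝕜] [NormedAddCommGroup K] [NormedSpace 𝕜 K]
  [NormedAddCommGroup H] [NormedSpace 𝕜 H]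

def ContinuousLinearMap.cornerEmbedding (ι : K →L[𝕜] H) (π : H →L[𝕜] K)
    (hπι : π ∘L ι = .id 𝕜 K) : (K →L[𝕜] K) →ₙₐ[𝕜] (H →L[𝕜] H) where
  toFun a := ι ∘L a ∘L π
  map_smul' c a := by ext; simp
  map_zero' := by ext; simp
  map_add' a b := by ext; simp
  map_mul' a b := by
    ext x
    change ι (a (b (π x))) = ι (a (π (ι (b (π x)))))
    rw [← π.comp_apply ι, hπι, ContinuousLinearMap.id_apply]

lemma ContinuousLinearMap.cornerEmbedding_injective (ι : K →L[𝕜] H) (π : H →L[𝕜] K)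
    (hπι : π ∘L ι = .id 𝕜 K) : Function.Injective (cornerEmbedding ι π hπι) := by
  have hleft : ∀ a, π ∘L cornerEmbedding ι π hπι a ∘L ι = a := fun a => by
    change π ∘L (ι ∘L a ∘L π) ∘L ι = a
    simp only [← ContinuousLinearMap.comp_assoc, hπι, ContinuousLinearMap.id_comp]
    rw [ContinuousLinearMap.comp_assoc, hπι, ContinuousLinearMap.comp_id]
  exact fun a b hab => by rw [← hleft a, hab, hleft]

end Corner

lemma exists_submodule_linearEquiv_of_not_finiteDimensional {𝕜 H V : Type*} [Field 𝕜]
    [AddCommGroup H] [Module 𝕜 H] [AddCommGroup V] [Module 𝕜 V] [FiniteDimensional 𝕜 V]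
    (hinf : ¬ FiniteDimensional 𝕜 H) : ∃ K : Submodule 𝕜 H, Nonempty (V ≃ₗ[𝕜] K) := by
  have hrank : (Module.finrank 𝕜 V : Cardinal) ≤ Module.rank 𝕜 H :=
    Cardinal.natCast_lt_aleph0.le.trans (not_lt.mp (mt Module.rank_lt_aleph0_iff.mp hinf))
  obtain ⟨f, hf⟩ := exists_linearIndependent_of_le_rank hrank
  exact ⟨_, ⟨(Module.finBasis 𝕜 V).equiv (Module.Basis.span hf) (Equiv.refl _)⟩⟩

lemma exists_algHom_continuousLinearMap_of_finiteDimensional {𝕜 H A V : Type*} [RCLike 𝕜]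
    [NormedAddCommGroup H] [NormedSpace 𝕜 H] [Ring A] [Algebra 𝕜 A] [AddCommGroup V] [Module 𝕜 V]
    [FiniteDimensional 𝕜 V] (hinf : ¬ FiniteDimensional 𝕜 H) (ρ : A →ₐ[𝕜] Module.End 𝕜 V)
    (ε : A →ₐ[𝕜] 𝕜) :
    ∃ χ : A →ₐ[𝕜] (H →L[𝕜] H), (∀ a, ρ a = 0 → ε a = 0 → χ a = 0) ∧ ∀ a, χ a = 0 → ρ a = 0 := by
  obtain ⟨K, ⟨e⟩⟩ := exists_submodule_linearEquiv_of_not_finiteDimensional (V := V) hinf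
  have : FiniteDimensional 𝕜 K := e.finiteDimensional
  obtain ⟨π, hπ⟩ := Submodule.ClosedComplemented.of_finiteDimensional K
  have hπι : π ∘L K.subtypeL = .id 𝕜 K := by ext x; simp [hπ]
  let Φ := (e.conjAlgEquiv 𝕜).trans (Module.End.toContinuousLinearMap K)
  let ψ : A →ₙₐ[𝕜] (H →L[𝕜] H) :=
    (ContinuousLinearMap.cornerEmbedding K.subtypeL π hπι).comp (Φ.toAlgHom.comp ρ)
  have hψ : ∀ a, ψ a = 0 ↔ ρ a = 0 := fun a => by
    change ContinuousLinearMap.cornerEmbedding K.subtypeL π hπι (Φ (ρ a)) = 0 ↔ _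
    rw [(ContinuousLinearMap.cornerEmbedding_injective _ _ hπι).eq_iff' (map_zero _),
      Φ.injective.eq_iff' (map_zero _)]
  refine ⟨ψ.extendByCharacter ε, fun a hρ hε => ?_, fun a hχ => (hψ a).mp ?_⟩
  · rw [NonUnitalAlgHom.extendByCharacter_apply, hε, zero_smul, zero_add, hψ, hρ]
  · rw [← NonUnitalAlgHom.extendByCharacter_mul_map_one ψ ε, hχ, zero_mul]

section Quotient

variable {R A : Type*} [CommRing R] [Ring A] [Algebra R A] {I : Ideal A} {a : A}

lemma Algebra.lsmul_quotient_eq_zero_of_mem {J : TwoSidedIdeal A} (hJI : J.asIdeal ≤ I)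
    (ha : a ∈ J) : Algebra.lsmul R R (A ⧸ I) a = 0 := by
  refine LinearMap.ext fun x => ?_
  obtain ⟨x, rfl⟩ := Submodule.Quotient.mk_surjective I x
  rw [Algebra.lsmul_apply, ← Submodule.Quotient.mk_smul, LinearMap.zero_apply,
    Submodule.Quotient.mk_eq_zero]
  exact hJI (J.mul_mem_right _ _ ha)

lemma Algebra.mem_of_lsmul_quotient_eq_zero (ha : Algebra.lsmul R R (A ⧸ I) a = 0) : a ∈ I := by
  have := LinearMap.congr_fun ha (Submodule.Quotient.mk 1)
  rwa [Algebra.lsmul_apply, ← Submodule.Quotient.mk_smul, smul_eq_mul, mul_one,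
    LinearMap.zero_apply, Submodule.Quotient.mk_eq_zero] at this

end Quotient

namespace FreeAlg

open MonoidAlgebra

variable {d : ℕ}

def X (i : Fin d) : FreeAlg d := MonoidAlgebra.of ℂ (FreeMonoid (Fin d)) (FreeMonoid.of i)

section Evaluation

variable {A : Type*} [Semiring A] [Algebra ℂ A]

variable (A) in
def zeroLocus (J : TwoSidedIdeal (FreeAlg d)) : Set (Fin d → A) :=
  {T | ∀ q ∈ J, evalTuple T q = 0}

def vanishingSet (S : Set (Fin d → A)) : Set (FreeAlg d) :=
  {p | ∀ T ∈ S, evalTuple T p = 0}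

@[simp]
lemma evalTuple_X (T : Fin d → A) (i : Fin d) : evalTuple T (X i) = T i := by
  simp [evalTuple, X]

lemma evalTuple_comp_X (f : FreeAlg d →ₐ[ℂ] A) : evalTuple (f ∘ X) = f :=
  algHom_ext' (FreeMonoid.hom_eq fun i => evalTuple_X _ i) (Subsingleton.elim _ _)

lemma evalTuple_zero_apply (p : FreeAlg d) : evalTuple (0 : Fin d → ℂ) p = p.coeff 1 := by
  induction p using induction_linear with
  | zero => simp
  | add p q hp hq => simp [hp, hq]
  | single w c =>
    cases w using FreeMonoid.casesOn with
    | one => simp [evalTuple]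
    | of_mul i w => simp [evalTuple, coeff_single]

end Evaluation

section Homogeneous

lemma coeff_homogComp (n : ℕ) (p : FreeAlg d) (w : FreeMonoid (Fin d)) :
    (homogComp n p).coeff w = if w.length = n then p.coeff w else 0 := by
  simp [homogComp, Finsupp.filter_apply]

lemma homogComp_zero (p : FreeAlg d) : homogComp 0 p = algebraMap ℂ (FreeAlg d) (p.coeff 1) := by
  ext w
  by_cases h : w = 1
  · simp [coeff_homogComp, h, coe_algebraMap]
  · simp [coeff_homogComp, h, coe_algebraMap, coeff_single]

lemma coeff_sum_homogComp (N : ℕ) (p : FreeAlg d) (w : FreeMonoid (Fin d)) :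
    (∑ n ∈ Finset.range (N + 1), homogComp n p).coeff w =
      if w.length ≤ N then p.coeff w else 0 := by
  simp only [coeff_sum, Finsupp.finsetSum_apply, coeff_homogComp]
  rw [Finset.sum_ite_eq]
  simp

def highDegIdeal (N : ℕ) : Ideal (FreeAlg d) where
  __ := supported ℂ ℂ {w : FreeMonoid (Fin d) | N < w.length}
  smul_mem' q s hs w hw := by
    classical
    obtain ⟨u, -, v, hv, rfl⟩ := Finset.mem_mul.mp (support_coeff_mul_subset q s hw)
    have : N < v.length := hs hv
    simp only [Set.mem_ofPred_eq, FreeMonoid.length_mul]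
    omega

lemma finite_quotient_of_highDegIdeal_le {N : ℕ} {I : Ideal (FreeAlg d)}
    (hI : highDegIdeal N ≤ I) : Module.Finite ℂ (FreeAlg d ⧸ I) := by
  set low := supported ℂ ℂ {w : FreeMonoid (Fin d) | w.length ≤ N} with hlow
  have : Module.Finite ℂ low := by
    rw [hlow, supported_eq_span_single]
    exact FiniteDimensional.span_of_finite ℂ ((List.finite_length_le (Fin d) N).image _)
  refine Module.Finite.of_surjective ((I.mkQ.restrictScalars ℂ) ∘ₗ low.subtype) fun x => ?_
  obtain ⟨p, rfl⟩ := Submodule.Quotient.mk_surjective I x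
  refine ⟨⟨∑ n ∈ Finset.range (N + 1), homogComp n p, mem_supported'.mpr fun w hw => ?_⟩,
    (Submodule.Quotient.eq I).mpr (hI (mem_supported'.mpr fun w hw => ?_))⟩
  · exact (coeff_sum_homogComp N p w).trans (if_neg hw)
  · change ((∑ n ∈ Finset.range (N + 1), homogComp n p) - p).coeff w = 0
    rw [coeff_sub, Finsupp.sub_apply, coeff_sum_homogComp, if_pos (not_lt.mp hw), sub_self]

end Homogeneous

section Generators

lemma evalTuple_zero_of_mem_span_X (A : Type*) [Semiring A] [Algebra ℂ A] {p : FreeAlg d}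
    (hp : p ∈ TwoSidedIdeal.span (Set.range X)) : evalTuple (0 : Fin d → A) p = 0 := by
  refine (TwoSidedIdeal.mem_ker _).mp (TwoSidedIdeal.span_le.mpr ?_ hp)
  rintro _ ⟨i, rfl⟩
  exact (TwoSidedIdeal.mem_ker _).mpr (evalTuple_X 0 i)

lemma single_mem_span_X {w : FreeMonoid (Fin d)} (hw : w ≠ 1) (c : ℂ) :
    single w c ∈ TwoSidedIdeal.span (Set.range (X (d := d))) := by
  cases w using FreeMonoid.casesOn with
  | one => exact absurd rfl hw
  | of_mul i w =>
    rw [← one_mul c, ← single_mul_single]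
    exact TwoSidedIdeal.mul_mem_right _ _ _ (TwoSidedIdeal.subset_span ⟨i, rfl⟩)

lemma mem_span_X_iff {p : FreeAlg d} :
    p ∈ TwoSidedIdeal.span (Set.range X) ↔ p.coeff 1 = 0 := by
  refine ⟨fun hp => ?_, fun hp => ?_⟩
  · rw [← evalTuple_zero_apply]
    exact evalTuple_zero_of_mem_span_X ℂ hp
  · rw [← sum_coeff_single p]
    refine TwoSidedIdeal.finsetSum_mem _ _ _ fun w _ => ?_
    by_cases hw : w = 1
    · rw [hw, hp, single_zero]
      exact TwoSidedIdeal.zero_mem _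
    · exact single_mem_span_X hw _

lemma isHomogIdeal_span_X : IsHomogIdeal (TwoSidedIdeal.span (Set.range (X (d := d)))) := by
  intro p hp n
  rw [mem_span_X_iff] at hp ⊢
  rw [coeff_homogComp, hp, ite_self]

lemma zeroLocus_span_X (A : Type*) [Semiring A] [Algebra ℂ A] :
    zeroLocus A (TwoSidedIdeal.span (Set.range (X (d := d)))) = {0} := by
  ext T
  refine ⟨fun hT => funext fun i => ?_, fun hT q hq => ?_⟩
  · rw [← evalTuple_X T i]
    exact hT _ (TwoSidedIdeal.subset_span ⟨i, rfl⟩)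
  · rw [Set.mem_singleton_iff.mp hT]
    exact evalTuple_zero_of_mem_span_X A hq

end Generators

end FreeAlg

namespace IsHomogIdeal

open FreeAlg MonoidAlgebra

variable {d : ℕ} {J : TwoSidedIdeal (FreeAlg d)}

lemma coeff_one_eq_zero (hJ : IsHomogIdeal J) (hJtop : J ≠ ⊤) {q : FreeAlg d} (hq : q ∈ J) :
    q.coeff 1 = 0 := by
  by_contra hq1
  refine hJtop (J.eq_top ?_)
  have h0 := J.mul_mem_left (algebraMap ℂ _ (q.coeff 1)⁻¹) _ (hJ q hq 0)
  rwa [homogComp_zero, ← map_mul, inv_mul_cancel₀ hq1, map_one] at h0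

lemma mem_of_mem_sup_highDegIdeal (hJ : IsHomogIdeal J) {N : ℕ} {p : FreeAlg d}
    (hp : p ∈ J.asIdeal ⊔ highDegIdeal N)
    (hdeg : p ∈ supported ℂ ℂ {w : FreeMonoid (Fin d) | w.length ≤ N}) : p ∈ J := by
  obtain ⟨j, hj, s, hs, rfl⟩ := Submodule.mem_sup.mp hp
  suffices j + s = ∑ n ∈ Finset.range (N + 1), homogComp n j from
    this ▸ J.finsetSum_mem _ _ fun n _ => hJ j (TwoSidedIdeal.mem_asIdeal.mp hj) n
  ext w
  rw [coeff_sum_homogComp]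
  split_ifs with hw
  · rw [coeff_add, Finsupp.add_apply, mem_supported'.mp hs w (not_lt.mpr hw), add_zero]
  · exact mem_supported'.mp hdeg w hw

variable {H : Type*} [NormedAddCommGroup H] [NormedSpace ℂ H]

theorem exists_mem_zeroLocus_evalTuple_ne_zero (hinf : ¬ FiniteDimensional ℂ H)
    (hJ : IsHomogIdeal J) {p : FreeAlg d} (hp : p ∉ J) :
    ∃ T ∈ zeroLocus (H →L[ℂ] H) J, evalTuple T p ≠ 0 := by
  have hJtop : J ≠ ⊤ := fun h => hp (h ▸ TwoSidedIdeal.mem_top _)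
  set N := p.coeff.support.sup FreeMonoid.length
  set I := J.asIdeal ⊔ highDegIdeal N
  have : Module.Finite ℂ (FreeAlg d ⧸ I) := finite_quotient_of_highDegIdeal_le le_sup_right
  obtain ⟨χ, hχJ, hχp⟩ := exists_algHom_continuousLinearMap_of_finiteDimensional (H := H) hinf
    (Algebra.lsmul ℂ ℂ (FreeAlg d ⧸ I) (A := FreeAlg d)) (evalTuple 0)
  refine ⟨χ ∘ X, fun q hq => ?_, fun hpT => ?_⟩ <;> rw [evalTuple_comp_X] at *
  · refine hχJ q (Algebra.lsmul_quotient_eq_zero_of_mem le_sup_left hq) ?_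
    rw [evalTuple_zero_apply, hJ.coeff_one_eq_zero hJtop hq]
  · have hdeg : p ∈ supported ℂ ℂ {w : FreeMonoid (Fin d) | w.length ≤ N} :=
      fun w hw => Finset.le_sup (f := FreeMonoid.length) hw
    exact hp (hJ.mem_of_mem_sup_highDegIdeal (Algebra.mem_of_lsmul_quotient_eq_zero (hχp p hpT))
      hdeg)

theorem vanishingSet_zeroLocus (hinf : ¬ FiniteDimensional ℂ H) (hJ : IsHomogIdeal J) :
    vanishingSet (zeroLocus (H →L[ℂ] H) J) = J := by
  ext p
  refine ⟨fun hp => ?_, fun hp T hT => hT p hp⟩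
  by_contra hpJ
  obtain ⟨T, hT, hpT⟩ := exists_mem_zeroLocus_evalTuple_ne_zero hinf hJ hpJ
  exact hpT (hp T hT)

theorem zeroLocus_inj (hinf : ¬ FiniteDimensional ℂ H) (hJ : IsHomogIdeal J)
    {J' : TwoSidedIdeal (FreeAlg d)} (hJ' : IsHomogIdeal J') :
    zeroLocus (H →L[ℂ] H) J = zeroLocus (H →L[ℂ] H) J' ↔ J = J' := by
  refine ⟨fun h => SetLike.coe_injective ?_, fun h => h ▸ rfl⟩
  rw [← hJ.vanishingSet_zeroLocus hinf, h, hJ'.vanishingSet_zeroLocus hinf]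

end IsHomogIdeal

theorem stmt9_general
    {H : Type*} [NormedAddCommGroup H] [InnerProductSpace ℂ H]
    (hinf : ¬ FiniteDimensional ℂ H)
    (d : ℕ)
    (J : TwoSidedIdeal (FreeAlg d)) (hJ : IsHomogIdeal J) :
    ({p : FreeAlg d | ∀ T : Fin d → H →L[ℂ] H,
        (∀ q ∈ J, evalTuple T q = 0) → evalTuple T p = 0} = (J : Set (FreeAlg d))) ∧
    ({T : Fin d → H →L[ℂ] H | ∀ q ∈ J, evalTuple T q = 0} = {fun _ => 0} ↔
      J = TwoSidedIdeal.span (Set.range fun i : Fin d =>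
        MonoidAlgebra.of ℂ (FreeMonoid (Fin d)) (FreeMonoid.of i))) := by
  refine ⟨hJ.vanishingSet_zeroLocus hinf, ?_⟩
  change FreeAlg.zeroLocus _ J = {0} ↔ J = TwoSidedIdeal.span (Set.range FreeAlg.X)
  rw [← FreeAlg.zeroLocus_span_X, hJ.zeroLocus_inj hinf FreeAlg.isHomogIdeal_span_X]

/-- **The noncommutative projective Nullstellensatz.**  For a homogeneous two-sided ideal
`J` of `ℂ⟨x₁,…,x_d⟩` and an infinite-dimensional separable Hilbert space `H`, the set of
polynomials vanishing on the zero set `Z(J) ⊆ B(H)^d` of `J` is exactly `J`; in particular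
`Z(J) = {0}` iff `J` is the two-sided ideal generated by `x₁,…,x_d`. -/
theorem stmt9
    {H : Type*} [NormedAddCommGroup H] [InnerProductSpace ℂ H] [CompleteSpace H]
    [TopologicalSpace.SeparableSpace H] (hinf : ¬ FiniteDimensional ℂ H)
    (d : ℕ) (hd : 1 ≤ d)
    (J : TwoSidedIdeal (FreeAlg d)) (hJ : IsHomogIdeal J) :
    ({p : FreeAlg d | ∀ T : Fin d → H →L[ℂ] H,
        (∀ q ∈ J, evalTuple T q = 0) → evalTuple T p = 0} = (J : Set (FreeAlg d))) ∧
    ({T : Fin d → H →L[ℂ] H | ∀ q ∈ J, evalTuple T q = 0} = {fun _ => 0} ↔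
      J = TwoSidedIdeal.span (Set.range fun i : Fin d =>
        MonoidAlgebra.of ℂ (FreeMonoid (Fin d)) (FreeMonoid.of i))) :=
  stmt9_general hinf d J hJ
end
end

section
/- Fix d ≥ 1 lat A, B ∈ M_d(ℂ). Let I_A denote the two-sided ideal of ℂ⟨x₁,…,x_d⟩ generated by the single quadratic element Σ_{i,j=1}^d a_{ij} x_i x_j, and similarly I_B. For a unitary d×d matrix U = (u_{ij}) let Φ_U be the algebra automorphism of ℂ⟨x₁,…,x_d⟩ determined by Φ_U(x_i) = Σ_j u_{ij} x_j. Then there exists a unitary U with Φ_U(I_A) = I_B if and only if there exist a nonzero λ ∈ ℂ and a unitary d×d matrix V with B = λ Vᵀ A V. -/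
open Matrix

noncomputable section

/-- The generator `x_i` of `ℂ⟨x₁,…,x_d⟩`. -/
def Xg (d : ℕ) (i : Fin d) : FreeAlg d :=
  MonoidAlgebra.of ℂ (FreeMonoid (Fin d)) (FreeMonoid.of i)

/-- The unitary change of variables `Φ_U` determined by `Φ_U(x_i) = Σ_j u_{ij} x_j`. -/
def PhiU {d : ℕ} (U : Matrix (Fin d) (Fin d) ℂ) : FreeAlg d →ₐ[ℂ] FreeAlg d :=
  evalTuple (fun i => ∑ j : Fin d, U i j • Xg d j)

/-- The ideal `I_A` generated by the single quadratic element `Σ_{i,j} a_{ij} x_i x_j`. -/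
def quadIdeal {d : ℕ} (A : Matrix (Fin d) (Fin d) ℂ) : TwoSidedIdeal (FreeAlg d) :=
  TwoSidedIdeal.span {∑ i : Fin d, ∑ j : Fin d, A i j • (Xg d i * Xg d j)}

/-!
A unitary change of variables maps `I_A` onto `I_{UᵀAU}`, so everything reduces to deciding
when two ideals `I_B`, `I_C` generated by one quadratic element coincide. The coefficients of
`x_i x_j` are detected by the nilpotent evaluation `x_k ↦ [k = i] E₀₁ + [k = j] E₁₂` into
`M₃(ℂ)`, which sends the relation of `C` to `C i j • E₀₂`. Since `E₀₂` is killed on both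
sides by the image of every `x_k`, these evaluations send all of `I_C`, for all `(i, j)` at
once, onto multiples of `(C i j • E₀₂)_{i,j}` with a common scalar. Hence `I_B = I_C` forces
`B = μ C` and `C = ν B`, i.e. `B = λ C` with `λ ≠ 0`.
-/

section

variable {d : ℕ}

theorem FreeAlg.induction_on {motive : FreeAlg d → Prop} (a : FreeAlg d)
    (scalar : ∀ r : ℂ, motive (algebraMap ℂ (FreeAlg d) r)) (X : ∀ k, motive (Xg d k))
    (add : ∀ a b, motive a → motive b → motive (a + b))
    (mul : ∀ a b, motive a → motive b → motive (a * b)) : motive a := by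
  induction a using MonoidAlgebra.induction_on with
  | of w =>
    induction w using FreeMonoid.inductionOn with
    | one => simpa using scalar 1
    | of k => exact X k
    | mul u v hu hv => simpa using mul _ _ hu hv
  | add a b ha hb => exact add a b ha hb
  | smul r a ha => simpa [Algebra.smul_def] using mul _ _ (scalar r) ha

theorem FreeAlg.algHom_ext {R : Type*} [Semiring R] [Algebra ℂ R] {f g : FreeAlg d →ₐ[ℂ] R}
    (h : ∀ k, f (Xg d k) = g (Xg d k)) : f = g := by
  refine AlgHom.ext fun a => ?_
  induction a using FreeAlg.induction_on with
  | scalar r => simp only [AlgHom.commutes]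
  | X k => exact h k
  | add a b ha hb => simp only [map_add, ha, hb]
  | mul a b ha hb => simp only [map_mul, ha, hb]

@[simp]
theorem evalTuple_Xg {R : Type*} [Semiring R] [Algebra ℂ R] (T : Fin d → R) (k : Fin d) :
    evalTuple T (Xg d k) = T k := by
  simp [evalTuple, Xg]

theorem exists_evalTuple_mul_eq_smul {R : Type*} [Ring R] [Algebra ℂ R] (T : Fin d → R) {e : R}
    (he : ∀ k, T k * e = 0) (a : FreeAlg d) : ∃ c : ℂ, evalTuple T a * e = c • e := by
  induction a using FreeAlg.induction_on with
  | scalar r => exact ⟨r, by rw [AlgHom.commutes, Algebra.smul_def]⟩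
  | X k => exact ⟨0, by simp [he]⟩
  | add a b ha hb =>
    obtain ⟨c, hc⟩ := ha
    obtain ⟨c', hc'⟩ := hb
    exact ⟨c + c', by rw [map_add, add_mul, hc, hc', add_smul]⟩
  | mul a b ha hb =>
    obtain ⟨c, hc⟩ := ha
    obtain ⟨c', hc'⟩ := hb
    exact ⟨c' * c, by rw [map_mul, mul_assoc, hc', mul_smul_comm, hc, smul_smul]⟩

theorem exists_mul_evalTuple_eq_smul {R : Type*} [Ring R] [Algebra ℂ R] (T : Fin d → R) {e : R}
    (he : ∀ k, e * T k = 0) (a : FreeAlg d) : ∃ c : ℂ, e * evalTuple T a = c • e := by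
  induction a using FreeAlg.induction_on with
  | scalar r => exact ⟨r, by rw [AlgHom.commutes, Algebra.smul_def, Algebra.commutes]⟩
  | X k => exact ⟨0, by simp [he]⟩
  | add a b ha hb =>
    obtain ⟨c, hc⟩ := ha
    obtain ⟨c', hc'⟩ := hb
    exact ⟨c + c', by rw [map_add, mul_add, hc, hc', add_smul]⟩
  | mul a b ha hb =>
    obtain ⟨c, hc⟩ := ha
    obtain ⟨c', hc'⟩ := hb
    exact ⟨c * c', by rw [map_mul, ← mul_assoc, hc, smul_mul_assoc, hc', smul_smul]⟩

theorem exists_evalTuple_eq_smul_of_mem_span {R : Type*} [Ring R] [Algebra ℂ R] (T : Fin d → R)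
    {p x : FreeAlg d} (hl : ∀ k, T k * evalTuple T p = 0) (hr : ∀ k, evalTuple T p * T k = 0)
    (hx : x ∈ TwoSidedIdeal.span {p}) : ∃ μ : ℂ, evalTuple T x = μ • evalTuple T p := by
  induction hx using TwoSidedIdeal.span_induction with
  | mem x hx => exact ⟨1, by rw [Set.mem_singleton_iff.mp hx, one_smul]⟩
  | zero => exact ⟨0, by rw [map_zero, zero_smul]⟩
  | add x y _ _ hx hy =>
    obtain ⟨μ, hμ⟩ := hx
    obtain ⟨ν, hν⟩ := hy
    exact ⟨μ + ν, by rw [map_add, hμ, hν, add_smul]⟩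
  | neg x _ hx =>
    obtain ⟨μ, hμ⟩ := hx
    exact ⟨-μ, by rw [map_neg, hμ, neg_smul]⟩
  | left_absorb a x _ hx =>
    obtain ⟨μ, hμ⟩ := hx
    obtain ⟨c, hc⟩ := exists_evalTuple_mul_eq_smul T hl a
    exact ⟨c * μ, by rw [map_mul, hμ, mul_smul_comm, hc, smul_smul, mul_comm]⟩
  | right_absorb b x _ hx =>
    obtain ⟨μ, hμ⟩ := hx
    obtain ⟨c, hc⟩ := exists_mul_evalTuple_eq_smul T hr b
    exact ⟨μ * c, by rw [map_mul, hμ, smul_mul_assoc, hc, smul_smul]⟩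

def quadRel (A : Matrix (Fin d) (Fin d) ℂ) : FreeAlg d :=
  ∑ i : Fin d, ∑ j : Fin d, A i j • (Xg d i * Xg d j)

theorem quadIdeal_eq_span (A : Matrix (Fin d) (Fin d) ℂ) :
    quadIdeal A = TwoSidedIdeal.span {quadRel A} := rfl

theorem quadRel_mem_quadIdeal (A : Matrix (Fin d) (Fin d) ℂ) : quadRel A ∈ quadIdeal A :=
  TwoSidedIdeal.subset_span rfl

def testMatrix (i j k : Fin d) : Matrix (Fin 3) (Fin 3) ℂ :=
  (if k = i then single 0 1 1 else 0) + (if k = j then single 1 2 1 else 0)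

theorem testMatrix_mul_testMatrix (i j k l : Fin d) :
    testMatrix i j k * testMatrix i j l = if k = i ∧ l = j then single 0 2 1 else 0 := by
  unfold testMatrix
  split_ifs <;> simp_all [add_mul, mul_add]

theorem testMatrix_mul_single (i j k : Fin d) (c : ℂ) : testMatrix i j k * single 0 2 c = 0 := by
  unfold testMatrix
  split_ifs <;> simp [add_mul]

theorem single_mul_testMatrix (i j k : Fin d) (c : ℂ) : single 0 2 c * testMatrix i j k = 0 := by
  unfold testMatrix
  split_ifs <;> simp [mul_add]

theorem evalTuple_testMatrix_quadRel (C : Matrix (Fin d) (Fin d) ℂ) :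
    evalTuple (fun k i j => testMatrix i j k) (quadRel C) = fun i j => single 0 2 (C i j) := by
  ext i j : 2
  simp [quadRel, testMatrix_mul_testMatrix, Finset.sum_apply, ite_and]

theorem eq_smul_of_quadRel_mem_quadIdeal {B C : Matrix (Fin d) (Fin d) ℂ}
    (h : quadRel B ∈ quadIdeal C) : ∃ μ : ℂ, B = μ • C := by
  have hl (k : Fin d) :
      (fun i j => testMatrix i j k) * evalTuple (fun k i j => testMatrix i j k) (quadRel C)
        = 0 := by
    ext i j : 2
    simp [evalTuple_testMatrix_quadRel, testMatrix_mul_single]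
  have hr (k : Fin d) :
      evalTuple (fun k i j => testMatrix i j k) (quadRel C) * (fun i j => testMatrix i j k)
        = 0 := by
    ext i j : 2
    simp [evalTuple_testMatrix_quadRel, single_mul_testMatrix]
  obtain ⟨μ, hμ⟩ := exists_evalTuple_eq_smul_of_mem_span _ hl hr h
  refine ⟨μ, Matrix.ext fun i j => ?_⟩
  simpa [evalTuple_testMatrix_quadRel] using congr_arg (· 0 2) (congr_fun (congr_fun hμ i) j)

theorem quadRel_smul (μ : ℂ) (C : Matrix (Fin d) (Fin d) ℂ) :
    quadRel (μ • C) = μ • quadRel C := by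
  simp [quadRel, Finset.smul_sum, smul_smul]

theorem quadIdeal_smul {μ : ℂ} (hμ : μ ≠ 0) (C : Matrix (Fin d) (Fin d) ℂ) :
    quadIdeal (μ • C) = quadIdeal C := by
  rw [quadIdeal_eq_span, quadIdeal_eq_span, quadRel_smul]
  refine le_antisymm ?_ ?_ <;> rw [TwoSidedIdeal.span_le, Set.singleton_subset_iff]
  · rw [Algebra.smul_def]
    exact TwoSidedIdeal.mul_mem_left _ _ _ (TwoSidedIdeal.subset_span rfl)
  · have := TwoSidedIdeal.mul_mem_left _ (algebraMap ℂ (FreeAlg d) μ⁻¹) _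
      (TwoSidedIdeal.subset_span (Set.mem_singleton (μ • quadRel C)))
    rwa [← Algebra.smul_def, inv_smul_smul₀ hμ] at this

theorem quadIdeal_eq_quadIdeal_iff {B C : Matrix (Fin d) (Fin d) ℂ} :
    quadIdeal B = quadIdeal C ↔ ∃ μ : ℂ, μ ≠ 0 ∧ B = μ • C := by
  refine ⟨fun h => ?_, fun ⟨μ, hμ, hB⟩ => hB ▸ quadIdeal_smul hμ C⟩
  obtain ⟨μ, hμ⟩ := eq_smul_of_quadRel_mem_quadIdeal (h ▸ quadRel_mem_quadIdeal B)
  obtain ⟨ν, hν⟩ := eq_smul_of_quadRel_mem_quadIdeal (h.symm ▸ quadRel_mem_quadIdeal C)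
  by_cases hμ0 : μ = 0
  · exact ⟨1, one_ne_zero, by rw [hν, hμ, hμ0]; simp⟩
  · exact ⟨μ, hμ0, hμ⟩

theorem PhiU_Xg (U : Matrix (Fin d) (Fin d) ℂ) (k : Fin d) :
    PhiU U (Xg d k) = ∑ j, U k j • Xg d j :=
  evalTuple_Xg _ k

theorem PhiU_mul (U W : Matrix (Fin d) (Fin d) ℂ) : PhiU (U * W) = (PhiU W).comp (PhiU U) :=
  FreeAlg.algHom_ext fun k => by
    simp only [PhiU_Xg, AlgHom.comp_apply, map_sum, map_smul, mul_apply, Finset.sum_smul,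
      Finset.smul_sum, smul_smul]
    exact Finset.sum_comm

theorem PhiU_one : PhiU (1 : Matrix (Fin d) (Fin d) ℂ) = AlgHom.id ℂ (FreeAlg d) :=
  FreeAlg.algHom_ext fun k => by simp [PhiU_Xg, one_apply, ite_smul]

theorem PhiU_quadRel (U A : Matrix (Fin d) (Fin d) ℂ) :
    PhiU U (quadRel A) = quadRel (Uᵀ * A * U) := by
  simp only [quadRel, map_sum, map_smul, map_mul, PhiU_Xg, smul_mul_smul_comm, mul_apply,
    transpose_apply, Finset.smul_sum, Finset.sum_smul, smul_smul, Finset.sum_mul, Finset.mul_sum]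
  rw [Finset.sum_comm_cycle]
  conv_lhs => enter [2, n]; rw [Finset.sum_comm_cycle]
  rw [Finset.sum_comm]
  refine Finset.sum_congr rfl fun m _ => Finset.sum_congr rfl fun n _ => ?_
  rw [Finset.sum_comm]
  exact Finset.sum_congr rfl fun l _ => Finset.sum_congr rfl fun k _ => by ring_nf

theorem PhiU_mem_quadIdeal (U A : Matrix (Fin d) (Fin d) ℂ) {x : FreeAlg d}
    (hx : x ∈ quadIdeal A) : PhiU U x ∈ quadIdeal (Uᵀ * A * U) := by
  have hle : quadIdeal A ≤ (quadIdeal (Uᵀ * A * U)).comap (PhiU U) := by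
    rw [quadIdeal_eq_span, TwoSidedIdeal.span_le, Set.singleton_subset_iff, SetLike.mem_coe,
      TwoSidedIdeal.mem_comap, PhiU_quadRel]
    exact quadRel_mem_quadIdeal _
  simpa only [TwoSidedIdeal.mem_comap] using hle hx

theorem PhiU_comp_PhiU_star {U : Matrix (Fin d) (Fin d) ℂ} (hU : U ∈ unitaryGroup (Fin d) ℂ) :
    (PhiU U).comp (PhiU (star U)) = AlgHom.id ℂ (FreeAlg d) := by
  rw [← PhiU_mul, mem_unitaryGroup_iff'.mp hU, PhiU_one]

theorem image_PhiU_quadIdeal {U : Matrix (Fin d) (Fin d) ℂ} (hU : U ∈ unitaryGroup (Fin d) ℂ)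
    (A : Matrix (Fin d) (Fin d) ℂ) :
    PhiU U '' (quadIdeal A : Set (FreeAlg d)) = quadIdeal (Uᵀ * A * U) := by
  refine subset_antisymm (Set.image_subset_iff.mpr fun x hx => PhiU_mem_quadIdeal U A hx)
    fun y hy => ⟨PhiU (star U) y, ?_, congr($(PhiU_comp_PhiU_star hU) y)⟩
  have hA : (star U)ᵀ * (Uᵀ * A * U) * star U = A := by
    have hUU : U * star U = 1 := mem_unitaryGroup_iff.mp hU
    calc (star U)ᵀ * (Uᵀ * A * U) * star U = (U * star U)ᵀ * A * (U * star U) := by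
          simp only [transpose_mul, Matrix.mul_assoc]
      _ = A := by rw [hUU, transpose_one, Matrix.one_mul, Matrix.mul_one]
  simpa [hA] using PhiU_mem_quadIdeal (star U) _ hy

end

theorem stmt16_general (d : ℕ) (A B : Matrix (Fin d) (Fin d) ℂ) :
    (∃ U ∈ Matrix.unitaryGroup (Fin d) ℂ,
        ⇑(PhiU U) '' (quadIdeal A : Set (FreeAlg d)) = (quadIdeal B : Set (FreeAlg d))) ↔
    ∃ (lam : ℂ) (V : Matrix (Fin d) (Fin d) ℂ), lam ≠ 0 ∧
        V ∈ Matrix.unitaryGroup (Fin d) ℂ ∧ B = lam • (Vᵀ * A * V) := by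
  have image_eq_iff {U : Matrix (Fin d) (Fin d) ℂ} (hU : U ∈ unitaryGroup (Fin d) ℂ) :
      PhiU U '' (quadIdeal A : Set (FreeAlg d)) = quadIdeal B ↔
        ∃ lam : ℂ, lam ≠ 0 ∧ B = lam • (Uᵀ * A * U) := by
    rw [image_PhiU_quadIdeal hU, SetLike.coe_set_eq, eq_comm, quadIdeal_eq_quadIdeal_iff]
  constructor
  · rintro ⟨U, hU, h⟩
    obtain ⟨lam, hlam, hB⟩ := (image_eq_iff hU).mp h
    exact ⟨lam, U, hlam, hU, hB⟩
  · rintro ⟨lam, V, hlam, hV, hB⟩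
    exact ⟨V, hV, (image_eq_iff hV).mpr ⟨lam, hlam, hB⟩⟩

/-- **Classification of maximal standard subproduct systems with one quadratic relation**
(via the correspondence between homogeneous ideals and subproduct systems): a unitary
change of variables maps `I_A` onto `I_B` iff `B = λ Vᵀ A V` for some `λ ≠ 0` and
unitary `V`. -/
theorem stmt16 (d : ℕ) (hd : 1 ≤ d) (A B : Matrix (Fin d) (Fin d) ℂ) :
    (∃ U ∈ Matrix.unitaryGroup (Fin d) ℂ,
        ⇑(PhiU U) '' (quadIdeal A : Set (FreeAlg d)) = (quadIdeal B : Set (FreeAlg d))) ↔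
    ∃ (lam : ℂ) (V : Matrix (Fin d) (Fin d) ℂ), lam ≠ 0 ∧
        V ∈ Matrix.unitaryGroup (Fin d) ℂ ∧ B = lam • (Vᵀ * A * V) :=
  stmt16_general d A B
end
end
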